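/- Hard look-ahead strengthening does not always yield a fixpoint of hard one-step strengthening: there exist an initial gossip graph G and a syntactic protocol P with (P^■)^□(G) ≠ P^■(G). Concretely, for P = LNS and G the 'diamond' graph on agents {0,1,2,3} with N the reflexive closure of {(2,0),(2,1),(3,0),(3,1)} and S the identity: LNS^■(G) has exactly 8 successful and 8 unsuccessful terminal sequences, while (LNS^■)^□(G) has exactly 8 successful and 4 unsuccessful terminal sequences; in particular (LNS^■)^□(G) is a proper subset of LNS^■(G). -/

import Mathlib

set_option maxHeartbeats 1000000

structure GossipGraph (A : Type) : Type where
  N : A → A → Prop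
  S : A → A → Prop
  refl_S : ∀ a, S a a
  S_sub_N : ∀ a b, S a b → N a b

namespace Gossip

variable {A : Type}

def Initial (G : GossipGraph A) : Prop := ∀ a b, G.S a b ↔ a = b

def doCall (G : GossipGraph A) (c : A × A) : GossipGraph A where
  N x y := G.N x y ∨ ((x = c.1 ∨ x = c.2) ∧ (G.N c.1 y ∨ G.N c.2 y))
  S x y := G.S x y ∨ ((x = c.1 ∨ x = c.2) ∧ (G.S c.1 y ∨ G.S c.2 y))
  refl_S a := Or.inl (G.refl_S a)
  S_sub_N a b h := by
    rcases h with h | ⟨h1, h2 | h2⟩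
    · exact Or.inl (G.S_sub_N a b h)
    · exact Or.inr ⟨h1, Or.inl (G.S_sub_N _ _ h2)⟩
    · exact Or.inr ⟨h1, Or.inr (G.S_sub_N _ _ h2)⟩

def doCalls (G : GossipGraph A) (σ : List (A × A)) : GossipGraph A :=
  σ.foldl doCall G

def PossibleSeq (G : GossipGraph A) : List (A × A) → Prop
  | [] => True
  | c :: σ => c.1 ≠ c.2 ∧ G.N c.1 c.2 ∧ PossibleSeq (doCall G c) σ

mutual
  inductive Form (A : Type) : Type where
    | top : Form A
    | atomN : A → A → Form A
    | atomS : A → A → Form A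
    | neg : Form A → Form A
    | conj : Form A → Form A → Form A
    | K : A → (A → A → Form A) → Form A → Form A
    | box : Prog A → Form A → Form A
  inductive Prog (A : Type) : Type where
    | test : Form A → Prog A
    | call : A → A → Prog A
    | seq : Prog A → Prog A → Prog A
    | cup : Prog A → Prog A → Prog A
    | star : Prog A → Prog A
end

abbrev Protocol (A : Type) := A → A → Form A

inductive Epi (G : GossipGraph A) (perm : List (A × A) → (A × A) → Prop) (a : A) :
    List (A × A) → List (A × A) → Prop where
  | refl : Epi G perm a [] []
  | call_out {σ τ : List (A × A)} {b : A} :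
      Epi G perm a σ τ →
      (∀ x, (doCalls G σ).N b x ↔ (doCalls G τ).N b x) →
      (∀ x, (doCalls G σ).S b x ↔ (doCalls G τ).S b x) →
      perm σ (a, b) → perm τ (a, b) →
      Epi G perm a (σ ++ [(a, b)]) (τ ++ [(a, b)])
  | call_in {σ τ : List (A × A)} {b : A} :
      Epi G perm a σ τ →
      (∀ x, (doCalls G σ).N b x ↔ (doCalls G τ).N b x) →
      (∀ x, (doCalls G σ).S b x ↔ (doCalls G τ).S b x) →
      perm σ (b, a) → perm τ (b, a) →
      Epi G perm a (σ ++ [(b, a)]) (τ ++ [(b, a)])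
  | other {σ τ : List (A × A)} {c d e f : A} :
      Epi G perm a σ τ →
      c ≠ a → d ≠ a → e ≠ a → f ≠ a →
      perm σ (c, d) → perm τ (e, f) →
      Epi G perm a (σ ++ [(c, d)]) (τ ++ [(e, f)])

mutual
  def Sat (G : GossipGraph A) : List (A × A) → Form A → Prop
    | _, Form.top => True
    | σ, Form.atomN a b => (doCalls G σ).N a b
    | σ, Form.atomS a b => (doCalls G σ).S a b
    | σ, Form.neg φ => ¬ Sat G σ φ
    | σ, Form.conj φ ψ => Sat G σ φ ∧ Sat G σ ψ
    | σ, Form.K a P φ =>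
        ∀ τ, Epi G (fun ρ c => c.1 ≠ c.2 ∧ (doCalls G ρ).N c.1 c.2 ∧ Sat G ρ (P c.1 c.2)) a τ σ →
          Sat G τ φ
    | σ, Form.box π φ => ∀ τ, ProgRel G π σ τ → Sat G τ φ
  def ProgRel (G : GossipGraph A) : Prog A → List (A × A) → List (A × A) → Prop
    | Prog.test φ, σ, τ => σ = τ ∧ Sat G σ φ
    | Prog.call a b, σ, τ => a ≠ b ∧ (doCalls G σ).N a b ∧ τ = σ ++ [(a, b)]
    | Prog.seq π π', σ, τ => ∃ ρ, ProgRel G π σ ρ ∧ ProgRel G π' ρ τ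
    | Prog.cup π π', σ, τ => ProgRel G π σ τ ∨ ProgRel G π' σ τ
    | Prog.star π, σ, τ => Relation.ReflTransGen (fun x y => ProgRel G π x y) σ τ
end


/-- A call `ab` is `P`-permitted at `(G, σ)` iff `a ≠ b`, `N^σ a b` and `G,σ ⊨ P_{ab}`. -/
def Permits (G : GossipGraph A) (P : Protocol A) (σ : List (A × A)) (c : A × A) : Prop :=
  c.1 ≠ c.2 ∧ (doCalls G σ).N c.1 c.2 ∧ Sat G σ (P c.1 c.2)

/-- The least set of call sequences containing `ε` and closed under adding permitted calls. -/
inductive Ext (G : GossipGraph A) (perm : List (A × A) → (A × A) → Prop) : List (A × A) → Prop where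
  | nil : Ext G perm []
  | snoc {σ : List (A × A)} {c : A × A} : Ext G perm σ → perm σ c → Ext G perm (σ ++ [c])

/-- The extension of a syntactic protocol `P` on an (initial) gossip graph `G`. -/
def extension (P : Protocol A) (G : GossipGraph A) : Set (List (A × A)) :=
  { σ | Ext G (Permits G P) σ }

/-- A formula is valid iff it is true at every gossip state, i.e. at every pair of an
initial gossip graph and a call sequence possible on it. -/
def Valid (φ : Form A) : Prop :=
  ∀ G : GossipGraph A, Initial G → ∀ σ : List (A × A), PossibleSeq G σ → Sat G σ φ

def impF (φ ψ : Form A) : Form A := Form.neg (Form.conj φ (Form.neg ψ))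
def orF (φ ψ : Form A) : Form A := Form.neg (Form.conj (Form.neg φ) (Form.neg ψ))
def iffF (φ ψ : Form A) : Form A := Form.conj (impF φ ψ) (impF ψ φ)
/-- The epistemic "possibility" dual `K̂ := ¬K¬`. -/
def hatK (a : A) (P : Protocol A) (φ : Form A) : Form A := Form.neg (Form.K a P (Form.neg φ))

/-- A semantic protocol, as raw data: a map from (initial) gossip graphs to sets of call
sequences. -/
abbrev RawSem (A : Type) := GossipGraph A → Set (List (A × A))

/-- For a semantic protocol, a call `c` is permitted at `(G,σ)` iff `σ;c ∈ P(G)`. -/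
def semPerm (Q : RawSem A) (G : GossipGraph A) (σ : List (A × A)) (c : A × A) : Prop :=
  σ ++ [c] ∈ Q G

/-- `σ` is terminal (in `Q(G)`) iff no further call is permitted. -/
def TerminalIn (Q : RawSem A) (G : GossipGraph A) (σ : List (A × A)) : Prop :=
  ∀ c : A × A, σ ++ [c] ∉ Q G

/-- All agents are experts: everyone knows all secrets. -/
def AllExpert (G : GossipGraph A) : Prop := ∀ a b : A, G.S a b

/-- A semantic protocol: assigns to each initial gossip graph a set of call sequences
possible on it, containing the empty sequence and closed under prefixes. -/
structure SemProtocol (A : Type) : Type where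
  ext : GossipGraph A → Set (List (A × A))
  nil_mem : ∀ G : GossipGraph A, Initial G → [] ∈ ext G
  prefix_closed : ∀ G : GossipGraph A, Initial G → ∀ σ c, σ ++ [c] ∈ ext G → σ ∈ ext G
  possible : ∀ G : GossipGraph A, Initial G → ∀ σ ∈ ext G, PossibleSeq G σ

/-- A semantic protocol is epistemic iff a call `ab` is permitted at `(G,σ)` exactly when it
is permitted at all states that agent `a` cannot distinguish from `(G,σ)`. -/
def SemEpistemic (Q : RawSem A) : Prop :=
  ∀ G : GossipGraph A, Initial G → ∀ σ ∈ Q G, ∀ a b : A, a ≠ b →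
    (σ ++ [(a, b)] ∈ Q G ↔ ∀ τ, Epi G (semPerm Q G) a τ σ → τ ++ [(a, b)] ∈ Q G)

/-- Relabelling the agents of a gossip graph along a permutation. -/
def mapGraph (J : Equiv.Perm A) (G : GossipGraph A) : GossipGraph A where
  N x y := G.N (J.symm x) (J.symm y)
  S x y := G.S (J.symm x) (J.symm y)
  refl_S a := G.refl_S _
  S_sub_N a b h := G.S_sub_N _ _ h

/-- Relabelling a call sequence, callwise. -/
def mapSeq (J : Equiv.Perm A) (σ : List (A × A)) : List (A × A) :=
  σ.map (fun c => (J c.1, J c.2))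

mutual
  /-- Relabelling the agents in a formula along a permutation. -/
  def mapForm (J : Equiv.Perm A) : Form A → Form A
    | Form.top => Form.top
    | Form.atomN a b => Form.atomN (J a) (J b)
    | Form.atomS a b => Form.atomS (J a) (J b)
    | Form.neg φ => Form.neg (mapForm J φ)
    | Form.conj φ ψ => Form.conj (mapForm J φ) (mapForm J ψ)
    | Form.K a P φ => Form.K (J a) (fun x y => mapForm J (P (J.symm x) (J.symm y))) (mapForm J φ)
    | Form.box π φ => Form.box (mapProg J π) (mapForm J φ)
  /-- Relabelling the agents in a program along a permutation. -/
  def mapProg (J : Equiv.Perm A) : Prog A → Prog A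
    | Prog.test φ => Prog.test (mapForm J φ)
    | Prog.call a b => Prog.call (J a) (J b)
    | Prog.seq π π' => Prog.seq (mapProg J π) (mapProg J π')
    | Prog.cup π π' => Prog.cup (mapProg J π) (mapProg J π')
    | Prog.star π => Prog.star (mapProg J π)
end

/-- A semantic protocol is symmetric iff it commutes with relabelling of the agents. -/
def SemSymmetric (Q : RawSem A) : Prop :=
  ∀ (J : Equiv.Perm A) (G : GossipGraph A), Initial G →
    Q (mapGraph J G) = mapSeq J '' Q G

def listConj (l : List (Form A)) : Form A := l.foldr Form.conj Form.top
def listDisj (l : List (Form A)) : Form A := l.foldr orF (Form.neg Form.top)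

noncomputable def pairsList (A : Type) [Fintype A] : List (A × A) := (Finset.univ : Finset (A × A)).toList
noncomputable def distinctPairs (A : Type) [Fintype A] [DecidableEq A] : List (A × A) :=
  (pairsList A).filter (fun c => decide (c.1 ≠ c.2))

/-- The formula `Ex`: all agents are experts. -/
noncomputable def ExForm (A : Type) [Fintype A] : Form A :=
  listConj ((pairsList A).map (fun c => Form.atomS c.1 c.2))

/-- `Ex ∨ ⋁_{i≠j} (N_ij ∧ P_ij)`. -/
noncomputable def oneStepBody (A : Type) [Fintype A] [DecidableEq A] (P : Protocol A) : Form A :=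
  orF (ExForm A) (listDisj ((distinctPairs A).map (fun c => Form.conj (Form.atomN c.1 c.2) (P c.1 c.2))))

/-- Hard one-step strengthening: `P_ab ∧ K_a^P [ab](Ex ∨ ⋁_{i≠j}(N_ij ∧ P_ij))`. -/
noncomputable def hardOneStep {A : Type} [Fintype A] [DecidableEq A] (P : Protocol A) : Protocol A :=
  fun a b => Form.conj (P a b) (Form.K a P (Form.box (Prog.call a b) (oneStepBody A P)))

/-- Soft one-step strengthening: `P_ab ∧ K̂_a^P [ab](Ex ∨ ⋁_{i≠j}(N_ij ∧ P_ij))`. -/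
noncomputable def softOneStep {A : Type} [Fintype A] [DecidableEq A] (P : Protocol A) : Protocol A :=
  fun a b => Form.conj (P a b) (hatK a P (Form.box (Prog.call a b) (oneStepBody A P)))

/-- The protocol `P` as a program:
`(⋃_{a≠b} ?(N_ab ∧ P_ab);ab)* ; ?⋀_{a≠b} ¬(N_ab ∧ P_ab)`. -/
noncomputable def protProg (A : Type) [Fintype A] [DecidableEq A] (P : Protocol A) : Prog A :=
  Prog.seq
    (Prog.star (((distinctPairs A).map (fun c =>
      Prog.seq (Prog.test (Form.conj (Form.atomN c.1 c.2) (P c.1 c.2))) (Prog.call c.1 c.2))).foldr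
        Prog.cup (Prog.test (Form.neg Form.top))))
    (Prog.test (listConj ((distinctPairs A).map (fun c =>
      Form.neg (Form.conj (Form.atomN c.1 c.2) (P c.1 c.2))))))

/-- Hard look-ahead strengthening: `P_ab ∧ K_a^P [ab]⟨P⟩Ex`. -/
noncomputable def hardLookAhead {A : Type} [Fintype A] [DecidableEq A] (P : Protocol A) : Protocol A :=
  fun a b => Form.conj (P a b)
    (Form.K a P (Form.box (Prog.call a b)
      (Form.neg (Form.box (protProg A P) (Form.neg (ExForm A))))))

/-- Soft look-ahead strengthening: `P_ab ∧ K̂_a^P [ab]⟨P⟩Ex`. -/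
noncomputable def softLookAhead {A : Type} [Fintype A] [DecidableEq A] (P : Protocol A) : Protocol A :=
  fun a b => Form.conj (P a b)
    (hatK a P (Form.box (Prog.call a b)
      (Form.neg (Form.box (protProg A P) (Form.neg (ExForm A))))))

/-- Hard uniform backward defoliation of a semantic protocol. -/
def HUBD (Q : RawSem A) : RawSem A := fun G =>
  { σ | σ ∈ Q G ∧ (σ = [] ∨ ∃ τ : List (A × A), ∃ a b : A, σ = τ ++ [(a, b)] ∧
      ∀ τ', Epi G (semPerm Q G) a τ' τ →
        (τ' ++ [(a, b)] ∈ Q G ∧ TerminalIn Q G (τ' ++ [(a, b)])) →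
          AllExpert (doCalls G (τ' ++ [(a, b)]))) }

/-- Soft uniform backward defoliation of a semantic protocol. -/
def SUBD (Q : RawSem A) : RawSem A := fun G =>
  { σ | σ ∈ Q G ∧ (σ = [] ∨ ∃ τ : List (A × A), ∃ a b : A, σ = τ ++ [(a, b)] ∧
      ∃ τ', Epi G (semPerm Q G) a τ' τ ∧
        ((τ' ++ [(a, b)] ∈ Q G ∧ TerminalIn Q G (τ' ++ [(a, b)])) →
          AllExpert (doCalls G (τ' ++ [(a, b)])))) }

/-- The syntactic protocol LNS: `LNS_ab := ¬ S_ab`. -/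
def LNSsyn (A : Type) : Protocol A := fun a b => Form.neg (Form.atomS a b)

/-- LNS-permitted: call `ab` permitted at `(G,σ)` iff `N^σ a b` and not `S^σ a b`. -/
def LNSperm (G : GossipGraph A) (σ : List (A × A)) (c : A × A) : Prop :=
  c.1 ≠ c.2 ∧ (doCalls G σ).N c.1 c.2 ∧ ¬ (doCalls G σ).S c.1 c.2

/-- LNS as a semantic protocol. -/
def LNSsem : RawSem A := fun G => { σ | Ext G (LNSperm G) σ }

/-- A semantic protocol is strongly successful on `G` iff every terminal sequence makes
all agents experts. -/
def StronglySuccessfulOn (Q : RawSem A) (G : GossipGraph A) : Prop :=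
  ∀ σ ∈ Q G, TerminalIn Q G σ → AllExpert (doCalls G σ)

/-- A semantic protocol is weakly successful on `G` iff some terminal sequence makes
all agents experts. -/
def WeaklySuccessfulOn (Q : RawSem A) (G : GossipGraph A) : Prop :=
  ∃ σ ∈ Q G, TerminalIn Q G σ ∧ AllExpert (doCalls G σ)


/-- The "diamond" initial gossip graph on agents 0,1,2,3:
`N` is the reflexive closure of {(2,0),(2,1),(3,0),(3,1)} and `S` is the identity. -/
def diamond : GossipGraph (Fin 4) where
  N x y := x = y ∨ (x = 2 ∧ y = 0) ∨ (x = 2 ∧ y = 1) ∨ (x = 3 ∧ y = 0) ∨ (x = 3 ∧ y = 1)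
  S x y := x = y
  refl_S a := rfl
  S_sub_N a b h := Or.inl h

/-- The successful terminal sequences of a semantic protocol on `G`. -/
def succTerminals {A : Type} (Q : RawSem A) (G : GossipGraph A) : Set (List (A × A)) :=
  {σ | σ ∈ Q G ∧ TerminalIn Q G σ ∧ AllExpert (doCalls G σ)}

/-- The unsuccessful terminal sequences of a semantic protocol on `G`. -/
def unsuccTerminals {A : Type} (Q : RawSem A) (G : GossipGraph A) : Set (List (A × A)) :=
  {σ | σ ∈ Q G ∧ TerminalIn Q G σ ∧ ¬ AllExpert (doCalls G σ)}


/-!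
Everything here is a finite computation. A call permitted by LNS, or by any strengthening of it,
teaches the caller a secret it did not know, so a call sequence has at most as many calls as
there are pairs of agents; and `K_a^P` quantifies over the `a`-indistinguishable sequences,
which can be enumerated one call at a time, matching the last call as `Epi` does. Hence each
permission condition of `LNS^■` and `(LNS^■)^□` is decided by a Boolean program, proved correct
for any finite set of agents, and the terminal sequences on the diamond are counted by `decide`.
-/

section Semantics

variable {G : GossipGraph A} {σ : List (A × A)}

@[simp] lemma sat_top : Sat G σ .top := trivial

@[simp] lemma sat_atomN {a b : A} : Sat G σ (.atomN a b) ↔ (doCalls G σ).N a b := Iff.rfl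

@[simp] lemma sat_atomS {a b : A} : Sat G σ (.atomS a b) ↔ (doCalls G σ).S a b := Iff.rfl

@[simp] lemma sat_neg {φ : Form A} : Sat G σ (.neg φ) ↔ ¬ Sat G σ φ := Iff.rfl

@[simp] lemma sat_conj {φ ψ : Form A} : Sat G σ (.conj φ ψ) ↔ Sat G σ φ ∧ Sat G σ ψ := Iff.rfl

@[simp] lemma sat_orF {φ ψ : Form A} : Sat G σ (orF φ ψ) ↔ Sat G σ φ ∨ Sat G σ ψ := by
  simp only [orF, sat_neg, sat_conj]
  tauto

lemma sat_K {a : A} {P : Protocol A} {φ : Form A} :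
    Sat G σ (.K a P φ) ↔ ∀ τ, Epi G (Permits G P) a τ σ → Sat G τ φ := Iff.rfl

lemma sat_box_call {a b : A} {φ : Form A} :
    Sat G σ (.box (.call a b) φ) ↔ (a ≠ b → (doCalls G σ).N a b → Sat G (σ ++ [(a, b)]) φ) :=
  ⟨fun h hne hN => h _ ⟨hne, hN, rfl⟩, fun h _ ⟨hne, hN, hτ⟩ => hτ ▸ h hne hN⟩

lemma sat_listConj {l : List (Form A)} : Sat G σ (listConj l) ↔ ∀ φ ∈ l, Sat G σ φ := by
  induction l with
  | nil => simp [listConj]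
  | cons φ l ih => simp [listConj, ← ih]

lemma sat_listDisj {l : List (Form A)} : Sat G σ (listDisj l) ↔ ∃ φ ∈ l, Sat G σ φ := by
  induction l with
  | nil => simp [listDisj]
  | cons φ l ih => simp [listDisj, ← ih]

lemma progRel_foldr_cup {l : List (Prog A)} {σ τ : List (A × A)} :
    ProgRel G (l.foldr .cup (.test (.neg .top))) σ τ ↔ ∃ π ∈ l, ProgRel G π σ τ := by
  induction l with
  | nil => simp [ProgRel]
  | cons π l ih => simp [ProgRel, ← ih]

lemma mem_pairsList [Fintype A] (c : A × A) : c ∈ pairsList A := by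
  simp [pairsList]

lemma mem_distinctPairs [Fintype A] [DecidableEq A] {c : A × A} :
    c ∈ distinctPairs A ↔ c.1 ≠ c.2 := by
  simp [distinctPairs, mem_pairsList]

lemma sat_ExForm [Fintype A] : Sat G σ (ExForm A) ↔ AllExpert (doCalls G σ) := by
  simp only [ExForm, sat_listConj, List.forall_mem_map, sat_atomS]
  exact ⟨fun h a b => h (a, b) (mem_pairsList _), fun h c _ => h c.1 c.2⟩

end Semantics

section Runs

variable {α : Type}

def SnocStep (perm : List α → α → Prop) (σ τ : List α) : Prop :=
  ∃ c, perm σ c ∧ τ = σ ++ [c]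

def TerminalContinuation (perm : List α → α → Prop) (σ τ : List α) : Prop :=
  Relation.ReflTransGen (SnocStep perm) σ τ ∧ ∀ c, ¬ perm τ c

/-- Depth-first search; continuations longer than the fuel `n` are lost. -/
def terminalRuns (permB : List α → α → Bool) (calls : List α) : ℕ → List α → List (List α)
  | 0, _ => []
  | n + 1, σ =>
    match calls.filter (permB σ) with
    | [] => [σ]
    | c :: cs => (c :: cs).flatMap fun c => terminalRuns permB calls n (σ ++ [c])

theorem mem_terminalRuns_iff {perm : List α → α → Prop} {permB : List α → α → Bool}
    {calls : List α} (hB : ∀ σ c, permB σ c = true ↔ perm σ c) (hcalls : ∀ c, c ∈ calls)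
    (μ : List α → ℕ) (hμ : ∀ σ c, perm σ c → μ (σ ++ [c]) < μ σ) :
    ∀ {n : ℕ} {σ τ : List α}, μ σ < n →
      (τ ∈ terminalRuns permB calls n σ ↔ TerminalContinuation perm σ τ)
  | 0, _, _, hn => absurd hn (Nat.not_lt_zero _)
  | n + 1, σ, τ, hn => by
    have hmem : ∀ c, c ∈ calls.filter (permB σ) ↔ perm σ c := by simp [hB, hcalls]
    rw [terminalRuns]
    split
    next hnil =>
      have hterm : ∀ c, ¬ perm σ c := by simpa [hnil] using hmem
      rw [List.mem_singleton]
      constructor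
      · rintro rfl
        exact ⟨.refl, hterm⟩
      · rintro ⟨hrun, -⟩
        rcases hrun.cases_head with h | ⟨_, ⟨c, hc, -⟩, -⟩
        · exact h.symm
        · exact absurd hc (hterm c)
    next c cs hcons =>
      rw [← hcons, List.mem_flatMap]
      constructor
      · rintro ⟨e, he, hτ⟩
        rw [hmem] at he
        obtain ⟨hrun, hterm⟩ := (mem_terminalRuns_iff hB hcalls μ hμ
          (Nat.lt_of_lt_of_le (hμ σ e he) (Nat.le_of_lt_succ hn))).1 hτ
        exact ⟨.head ⟨e, he, rfl⟩ hrun, hterm⟩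
      · rintro ⟨hrun, hterm⟩
        rcases hrun.cases_head with rfl | ⟨_, ⟨e, he, rfl⟩, hrun⟩
        · exact absurd ((hmem c).1 (hcons ▸ List.mem_cons_self)) (hterm c)
        · exact ⟨e, (hmem e).2 he, (mem_terminalRuns_iff hB hcalls μ hμ
            (Nat.lt_of_lt_of_le (hμ σ e he) (Nat.le_of_lt_succ hn))).2 ⟨hrun, hterm⟩⟩

end Runs

section Extensions

variable {G : GossipGraph A} {perm : List (A × A) → A × A → Prop} {σ : List (A × A)}

lemma ext_iff_reflTransGen : Ext G perm σ ↔ Relation.ReflTransGen (SnocStep perm) [] σ := by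
  constructor
  · intro h
    induction h with
    | nil => exact .refl
    | snoc _ hc ih => exact ih.tail ⟨_, hc, rfl⟩
  · intro h
    induction h with
    | refl => exact .nil
    | tail _ hstep ih =>
      obtain ⟨c, hc, rfl⟩ := hstep
      exact ih.snoc hc

lemma ext_snoc_iff {c : A × A} : Ext G perm (σ ++ [c]) ↔ Ext G perm σ ∧ perm σ c := by
  refine ⟨fun h => ?_, fun ⟨h, hc⟩ => h.snoc hc⟩
  generalize hσc : σ ++ [c] = σc at h
  cases h with
  | nil => simp at hσc
  | snoc h hc =>
    obtain ⟨rfl, hcc⟩ := List.append_inj' hσc rfl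
    obtain rfl := List.singleton_inj.1 hcc
    exact ⟨h, hc⟩

lemma mem_extension_terminalIn_iff {P : Protocol A} :
    σ ∈ extension P G ∧ TerminalIn (extension P) G σ ↔
      TerminalContinuation (Permits G P) [] σ :=
  ⟨fun ⟨h, hterm⟩ => ⟨ext_iff_reflTransGen.1 h, fun c hc => hterm c (h.snoc hc)⟩,
    fun ⟨h, hterm⟩ => ⟨ext_iff_reflTransGen.2 h, fun c hc => hterm c (ext_snoc_iff.1 hc).2⟩⟩

lemma ssubset_of_ncard_unsuccTerminals_ne {Q P : RawSem A} (hsub : Q G ⊆ P G)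
    (hne : (unsuccTerminals Q G).ncard ≠ (unsuccTerminals P G).ncard) : Q G ⊂ P G :=
  Set.ssubset_iff_subset_ne.2
    ⟨hsub, fun heq => hne (by simp only [unsuccTerminals, TerminalIn, heq])⟩

end Extensions

section Strengthenings

variable [Fintype A] [DecidableEq A] {G : GossipGraph A} {P : Protocol A} {σ : List (A × A)}

lemma progRel_protProg {τ : List (A × A)} :
    ProgRel G (protProg A P) σ τ ↔ TerminalContinuation (Permits G P) σ τ := by
  have hstep : ∀ ρ ρ', ProgRel G (((distinctPairs A).map fun c =>
      Prog.seq (.test (.conj (.atomN c.1 c.2) (P c.1 c.2))) (.call c.1 c.2)).foldr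
        .cup (.test (.neg .top))) ρ ρ' ↔ SnocStep (Permits G P) ρ ρ' := by
    intro ρ ρ'
    simp only [progRel_foldr_cup, List.mem_map]
    constructor
    · rintro ⟨_, ⟨c, -, rfl⟩, _, ⟨rfl, hN, hP⟩, hne, -, rfl⟩
      exact ⟨c, ⟨hne, hN, hP⟩, rfl⟩
    · rintro ⟨c, ⟨hne, hN, hP⟩, rfl⟩
      exact ⟨_, ⟨c, mem_distinctPairs.2 hne, rfl⟩, ρ, ⟨rfl, hN, hP⟩, hne, hN, rfl⟩
  have hterm : Sat G τ (listConj ((distinctPairs A).map fun c =>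
      .neg (.conj (.atomN c.1 c.2) (P c.1 c.2)))) ↔ ∀ c, ¬ Permits G P τ c := by
    simp only [sat_listConj, List.forall_mem_map, mem_distinctPairs, sat_neg, sat_conj,
      sat_atomN, Permits]
    exact ⟨fun h c ⟨hne, hN, hP⟩ => h c hne ⟨hN, hP⟩, fun h c hne ⟨hN, hP⟩ => h c ⟨hne, hN, hP⟩⟩
  simp only [protProg, ProgRel, TerminalContinuation, ← hterm]
  constructor
  · rintro ⟨_, hrun, rfl, hsat⟩
    exact ⟨Relation.ReflTransGen.mono (fun _ _ h => (hstep _ _).1 h) _ _ hrun, hsat⟩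
  · rintro ⟨hrun, hsat⟩
    exact ⟨τ, Relation.ReflTransGen.mono (fun _ _ h => (hstep _ _).2 h) _ _ hrun, rfl, hsat⟩

lemma extension_hardOneStep_subset : extension (hardOneStep P) G ⊆ extension P G := by
  intro σ h
  induction h with
  | nil => exact .nil
  | snoc _ hc ih => exact ih.snoc ⟨hc.1, hc.2.1, hc.2.2.1⟩

lemma sat_possibly_protProg_ExForm :
    Sat G σ (.neg (.box (protProg A P) (.neg (ExForm A)))) ↔
      ∃ τ, TerminalContinuation (Permits G P) σ τ ∧ AllExpert (doCalls G τ) := by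
  simp [Sat, progRel_protProg, sat_ExForm]

lemma permits_hardLookAhead {c : A × A} :
    Permits G (hardLookAhead P) σ c ↔ Permits G P σ c ∧
      ∀ τ, Epi G (Permits G P) c.1 τ σ → (doCalls G τ).N c.1 c.2 →
        ∃ ρ, TerminalContinuation (Permits G P) (τ ++ [c]) ρ ∧ AllExpert (doCalls G ρ) := by
  simp only [Permits, hardLookAhead, sat_conj, sat_K, sat_box_call, sat_possibly_protProg_ExForm]
  exact ⟨fun ⟨hne, hN, hP, hK⟩ => ⟨⟨hne, hN, hP⟩, fun τ hτ hNτ => hK τ hτ hne hNτ⟩,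
    fun ⟨⟨hne, hN, hP⟩, hK⟩ => ⟨hne, hN, hP, fun τ hτ _ hNτ => hK τ hτ hNτ⟩⟩

lemma sat_oneStepBody :
    Sat G σ (oneStepBody A P) ↔ AllExpert (doCalls G σ) ∨ ∃ c, Permits G P σ c := by
  simp only [oneStepBody, sat_orF, sat_ExForm, sat_listDisj, List.mem_map]
  refine or_congr Iff.rfl ⟨?_, ?_⟩
  · rintro ⟨_, ⟨c, hc, rfl⟩, hN, hP⟩
    exact ⟨c, mem_distinctPairs.1 hc, hN, hP⟩
  · rintro ⟨c, hne, hN, hP⟩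
    exact ⟨_, ⟨c, mem_distinctPairs.2 hne, rfl⟩, hN, hP⟩

lemma permits_hardOneStep {c : A × A} :
    Permits G (hardOneStep P) σ c ↔ Permits G P σ c ∧
      ∀ τ, Epi G (Permits G P) c.1 τ σ → (doCalls G τ).N c.1 c.2 →
        AllExpert (doCalls G (τ ++ [c])) ∨ ∃ e, Permits G P (τ ++ [c]) e := by
  simp only [Permits, hardOneStep, sat_conj, sat_K, sat_box_call, sat_oneStepBody]
  exact ⟨fun ⟨hne, hN, hP, hK⟩ => ⟨⟨hne, hN, hP⟩, fun τ hτ hNτ => hK τ hτ hne hNτ⟩,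
    fun ⟨⟨hne, hN, hP⟩, hK⟩ => ⟨hne, hN, hP, fun τ hτ _ hNτ => hK τ hτ hNτ⟩⟩

end Strengthenings

section Knowledge

variable {G : GossipGraph A}

lemma doCalls_append_singleton (σ : List (A × A)) (c : A × A) :
    doCalls G (σ ++ [c]) = doCall (doCalls G σ) c := by
  simp [doCalls]

open Classical in
noncomputable def unknownSecrets [Fintype A] (G : GossipGraph A) : ℕ :=
  (Finset.univ.filter fun p : A × A => ¬ G.S p.1 p.2).card

lemma unknownSecrets_doCall_lt [Fintype A] {c : A × A} (h : ¬ G.S c.1 c.2) :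
    unknownSecrets (doCall G c) < unknownSecrets G := by
  classical
  refine Finset.card_lt_card ((Finset.ssubset_iff_of_subset fun p => ?_).2 ⟨c, ?_, ?_⟩)
  · simp +contextual [doCall]
  · simpa using h
  · simp [doCall, G.refl_S]

def PermitsOnlyUnknown (G : GossipGraph A) (P : Protocol A) : Prop :=
  ∀ σ c, Permits G P σ c → ¬ (doCalls G σ).S c.1 c.2

lemma permitsOnlyUnknown_LNSsyn : PermitsOnlyUnknown G (LNSsyn A) :=
  fun _ _ h => h.2.2

lemma PermitsOnlyUnknown.mono {P Q : Protocol A} (hP : PermitsOnlyUnknown G P)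
    (hQP : ∀ σ a b, Sat G σ (Q a b) → Sat G σ (P a b)) : PermitsOnlyUnknown G Q :=
  fun σ c ⟨hne, hN, hQ⟩ => hP σ c ⟨hne, hN, hQP _ _ _ hQ⟩

lemma PermitsOnlyUnknown.hardLookAhead [Fintype A] [DecidableEq A] {P : Protocol A}
    (hP : PermitsOnlyUnknown G P) : PermitsOnlyUnknown G (hardLookAhead P) :=
  hP.mono fun _ _ _ h => h.1

lemma PermitsOnlyUnknown.hardOneStep [Fintype A] [DecidableEq A] {P : Protocol A}
    (hP : PermitsOnlyUnknown G P) : PermitsOnlyUnknown G (hardOneStep P) :=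
  hP.mono fun _ _ _ h => h.1

end Knowledge

section Indistinguishability

variable {G : GossipGraph A} {perm : List (A × A) → A × A → Prop} {a : A}

def SameLocalState (G : GossipGraph A) (b : A) (τ σ : List (A × A)) : Prop :=
  (∀ x, (doCalls G τ).N b x ↔ (doCalls G σ).N b x) ∧
    (∀ x, (doCalls G τ).S b x ↔ (doCalls G σ).S b x)

def LastCallIndist [DecidableEq A] (G : GossipGraph A) (a : A) (τ σ : List (A × A))
    (e d : A × A) : Prop :=
  if d.1 = a then e = d ∧ SameLocalState G d.2 τ σ
  else if d.2 = a then e = d ∧ SameLocalState G d.1 τ σ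
  else e.1 ≠ a ∧ e.2 ≠ a

lemma epi_nil_iff {τ : List (A × A)} : Epi G perm a τ [] ↔ τ = [] := by
  refine ⟨fun h => ?_, by rintro rfl; exact .refl⟩
  generalize hσ : ([] : List (A × A)) = σ at h
  cases h <;> simp_all

lemma epi_snoc_iff [DecidableEq A] {τ σ : List (A × A)} {d : A × A} :
    Epi G perm a τ (σ ++ [d]) ↔ perm σ d ∧
      ∃ τ', Epi G perm a τ' σ ∧ ∃ e, τ = τ' ++ [e] ∧ perm τ' e ∧ LastCallIndist G a τ' σ e d := by
  constructor
  · intro h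
    generalize hσd : σ ++ [d] = σd at h
    cases h with
    | refl => simp at hσd
    | @call_out τ' _ b h hN hS hτ' hσ =>
      obtain ⟨rfl, hd⟩ := List.append_inj' hσd rfl
      obtain rfl := (List.singleton_inj.1 hd).symm
      exact ⟨hσ, τ', h, _, rfl, hτ', by simp [LastCallIndist, SameLocalState, hN, hS]⟩
    | @call_in τ' _ b h hN hS hτ' hσ =>
      obtain ⟨rfl, hd⟩ := List.append_inj' hσd rfl
      obtain rfl := (List.singleton_inj.1 hd).symm
      refine ⟨hσ, τ', h, _, rfl, hτ', ?_⟩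
      by_cases hb : b = a
      · subst hb
        simp [LastCallIndist, SameLocalState, hN, hS]
      · simp [LastCallIndist, SameLocalState, hb, hN, hS]
    | @other τ' _ c₁ c₂ d₁ d₂ h hc₁ hc₂ hd₁ hd₂ hτ' hσ =>
      obtain ⟨rfl, hd⟩ := List.append_inj' hσd rfl
      obtain rfl := (List.singleton_inj.1 hd).symm
      exact ⟨hσ, τ', h, _, rfl, hτ', by simp [LastCallIndist, hc₁, hc₂, hd₁, hd₂]⟩
  · rintro ⟨hσ, τ', h, e, rfl, hτ', hlast⟩
    obtain ⟨d₁, d₂⟩ := d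
    unfold LastCallIndist at hlast
    split_ifs at hlast with h₁ h₂
    · obtain ⟨rfl, hN, hS⟩ := hlast
      subst h₁
      exact h.call_out hN hS hτ' hσ
    · obtain ⟨rfl, hN, hS⟩ := hlast
      subst h₂
      exact h.call_in hN hS hτ' hσ
    · exact h.other hlast.1 hlast.2 h₁ h₂ hτ' hσ

end Indistinguishability

def Decides (G : GossipGraph A) (P : Protocol A) (permB : List (A × A) → A × A → Bool) : Prop :=
  ∀ σ c, permB σ c = true ↔ Permits G P σ c

structure BoolModel (G : GossipGraph A) where
  agents : List A
  mem_agents : ∀ a, a ∈ agents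
  N : List (A × A) → A → A → Bool
  S : List (A × A) → A → A → Bool
  N_iff : ∀ σ a b, N σ a b = true ↔ (doCalls G σ).N a b
  S_iff : ∀ σ a b, S σ a b = true ↔ (doCalls G σ).S a b

namespace BoolModel

variable {G : GossipGraph A} (M : BoolModel G)

def calls : List (A × A) := M.agents.flatMap fun a => M.agents.map (a, ·)

lemma mem_calls (c : A × A) : c ∈ M.calls :=
  List.mem_flatMap.2 ⟨c.1, M.mem_agents _, List.mem_map.2 ⟨c.2, M.mem_agents _, rfl⟩⟩

def expertB (σ : List (A × A)) : Bool := M.agents.all fun a => M.agents.all (M.S σ a)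

lemma expertB_iff {σ : List (A × A)} : M.expertB σ = true ↔ AllExpert (doCalls G σ) := by
  simp [expertB, AllExpert, M.mem_agents, M.S_iff]

def sameLocalStateB (b : A) (τ σ : List (A × A)) : Bool :=
  M.agents.all fun x => M.N τ b x == M.N σ b x && M.S τ b x == M.S σ b x

lemma sameLocalStateB_iff {b : A} {τ σ : List (A × A)} :
    M.sameLocalStateB b τ σ = true ↔ SameLocalState G b τ σ := by
  have hx : ∀ x, (M.N τ b x = M.N σ b x ∧ M.S τ b x = M.S σ b x) ↔
      ((doCalls G τ).N b x ↔ (doCalls G σ).N b x) ∧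
        ((doCalls G τ).S b x ↔ (doCalls G σ).S b x) := by
    intro x
    rw [Bool.eq_iff_iff (a := M.N τ b x), Bool.eq_iff_iff (a := M.S τ b x), M.N_iff, M.N_iff,
      M.S_iff, M.S_iff]
  simp only [sameLocalStateB, SameLocalState, List.all_eq_true, Bool.and_eq_true, beq_iff_eq,
    hx, ← forall_and]
  exact ⟨fun h x => h x (M.mem_agents x), fun h x _ => h x⟩

/-- The fuel suffices because every permitted call decreases `unknownSecrets`. -/
def terminalRuns (permB : List (A × A) → A × A → Bool) (σ : List (A × A)) :
    List (List (A × A)) :=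
  Gossip.terminalRuns permB M.calls (M.calls.length + 1) σ

lemma unknownSecrets_le_length [Fintype A] (H : GossipGraph A) :
    unknownSecrets H ≤ M.calls.length := by
  classical
  calc unknownSecrets H ≤ Fintype.card (A × A) := Finset.card_filter_le _ _
    _ ≤ M.calls.toFinset.card :=
      Finset.card_le_card fun c _ => List.mem_toFinset.2 (M.mem_calls c)
    _ ≤ M.calls.length := List.toFinset_card_le _

lemma mem_terminalRuns_iff [Fintype A] {P : Protocol A} {permB : List (A × A) → A × A → Bool}
    (hB : Decides G P permB) (hP : PermitsOnlyUnknown G P)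
    {σ τ : List (A × A)} :
    τ ∈ M.terminalRuns permB σ ↔ TerminalContinuation (Permits G P) σ τ :=
  Gossip.mem_terminalRuns_iff hB M.mem_calls (fun σ => unknownSecrets (doCalls G σ))
    (fun σ c hc => by
      rw [doCalls_append_singleton]
      exact unknownSecrets_doCall_lt (hP σ c hc))
    (Nat.lt_succ_of_le (M.unknownSecrets_le_length _))

variable [DecidableEq A]

def lnsB (σ : List (A × A)) (c : A × A) : Bool :=
  decide (c.1 ≠ c.2) && M.N σ c.1 c.2 && !M.S σ c.1 c.2

lemma decides_lnsB : Decides G (LNSsyn A) M.lnsB := by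
  intro σ c
  simp [lnsB, Permits, LNSsyn, M.N_iff, ← M.S_iff, and_assoc]

section Epistemic

variable (permB : List (A × A) → A × A → Bool) (a : A)

def epiStep (σ : List (A × A)) (d : A × A) (τ : List (A × A)) : List (List (A × A)) :=
  if d.1 = a then (if permB τ d && M.sameLocalStateB d.2 τ σ then [τ ++ [d]] else [])
  else if d.2 = a then (if permB τ d && M.sameLocalStateB d.1 τ σ then [τ ++ [d]] else [])
  else (M.calls.filter fun e => decide (e.1 ≠ a) && decide (e.2 ≠ a) && permB τ e).map
    (τ ++ [·])

/-- Recursion on the reversed sequence, so that it peels off the last call as `Epi` does. -/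
def epiClassRev : List (A × A) → List (List (A × A))
  | [] => [[]]
  | d :: σ =>
    if permB σ.reverse d then (epiClassRev σ).flatMap (M.epiStep permB a σ.reverse d) else []

def epiClass (σ : List (A × A)) : List (List (A × A)) := M.epiClassRev permB a σ.reverse

variable {permB a}

lemma mem_epiStep_iff {σ τ τ' : List (A × A)} {d : A × A} :
    τ' ∈ M.epiStep permB a σ d τ ↔
      ∃ e, τ' = τ ++ [e] ∧ permB τ e = true ∧ LastCallIndist G a τ σ e d := by
  unfold epiStep LastCallIndist
  split_ifs <;> simp_all [M.sameLocalStateB_iff, M.mem_calls, and_assoc]; grind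

lemma mem_epiClass_iff {perm : List (A × A) → A × A → Prop}
    (hB : ∀ σ c, permB σ c = true ↔ perm σ c) {σ τ : List (A × A)} :
    τ ∈ M.epiClass permB a σ ↔ Epi G perm a τ σ := by
  induction σ using List.reverseRecOn generalizing τ with
  | nil => simp [epiClass, epiClassRev, epi_nil_iff]
  | append_singleton σ d ih =>
    have hsnoc : M.epiClass permB a (σ ++ [d]) =
        if permB σ d then (M.epiClass permB a σ).flatMap (M.epiStep permB a σ d) else [] := by
      simp [epiClass, epiClassRev]
    rw [hsnoc, epi_snoc_iff, ← hB σ d]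
    cases permB σ d <;> simp [ih, M.mem_epiStep_iff, hB]

end Epistemic

variable [Fintype A] {P : Protocol A} {permB : List (A × A) → A × A → Bool}

def hardLookAheadB (permB : List (A × A) → A × A → Bool) (σ : List (A × A)) (c : A × A) :
    Bool :=
  permB σ c && (M.epiClass permB c.1 σ).all fun τ =>
    !M.N τ c.1 c.2 || (M.terminalRuns permB (τ ++ [c])).any M.expertB

lemma decides_hardLookAheadB (hB : Decides G P permB) (hP : PermitsOnlyUnknown G P) :
    Decides G (hardLookAhead P) (M.hardLookAheadB permB) := by
  intro σ c
  simp only [hardLookAheadB, permits_hardLookAhead, Bool.and_eq_true, hB σ c, List.all_eq_true,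
    M.mem_epiClass_iff hB, Bool.or_eq_true, Bool.not_eq_true', Bool.eq_false_iff, Ne,
    M.N_iff, List.any_eq_true, M.mem_terminalRuns_iff hB hP, M.expertB_iff, or_iff_not_imp_left,
    not_not]

def hardOneStepB (permB : List (A × A) → A × A → Bool) (σ : List (A × A)) (c : A × A) :
    Bool :=
  permB σ c && (M.epiClass permB c.1 σ).all fun τ =>
    !M.N τ c.1 c.2 || M.expertB (τ ++ [c]) || M.calls.any (permB (τ ++ [c]))

lemma decides_hardOneStepB (hB : Decides G P permB) :
    Decides G (hardOneStep P) (M.hardOneStepB permB) := by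
  intro σ c
  simp only [hardOneStepB, permits_hardOneStep, Bool.and_eq_true, hB σ c, List.all_eq_true,
    M.mem_epiClass_iff hB, Bool.or_eq_true, Bool.not_eq_true', Bool.eq_false_iff, Ne,
    M.N_iff, List.any_eq_true, M.expertB_iff, or_iff_not_imp_left, not_not]
  have hB' : ∀ σ c, permB σ c = true ↔ Permits G P σ c := hB
  simp [M.mem_calls, hB']

lemma succTerminals_eq (hB : Decides G P permB) (hP : PermitsOnlyUnknown G P) :
    succTerminals (extension P) G = ↑((M.terminalRuns permB []).filter M.expertB).toFinset := by
  ext σ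
  simp [succTerminals, ← and_assoc, mem_extension_terminalIn_iff, M.mem_terminalRuns_iff hB hP,
    M.expertB_iff]

lemma unsuccTerminals_eq (hB : Decides G P permB) (hP : PermitsOnlyUnknown G P) :
    unsuccTerminals (extension P) G =
      ↑((M.terminalRuns permB []).filter fun σ => !M.expertB σ).toFinset := by
  ext σ
  simp [unsuccTerminals, ← and_assoc, mem_extension_terminalIn_iff, M.mem_terminalRuns_iff hB hP,
    ← M.expertB_iff]

end BoolModel

section Bitboards

def callRel (R : A → A → Prop) (c : A × A) (x y : A) : Prop :=
  R x y ∨ ((x = c.1 ∨ x = c.2) ∧ (R c.1 y ∨ R c.2 y))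

lemma doCalls_N (G : GossipGraph A) (σ : List (A × A)) :
    (doCalls G σ).N = σ.foldl callRel G.N := by
  induction σ generalizing G with
  | nil => rfl
  | cons c σ ih => exact ih (doCall G c)

lemma doCalls_S (G : GossipGraph A) (σ : List (A × A)) :
    (doCalls G σ).S = σ.foldl callRel G.S := by
  induction σ generalizing G with
  | nil => rfl
  | cons c σ ih => exact ih (doCall G c)

variable {n : ℕ}

/-- A relation on `Fin n` stored as a natural number: row `a` occupies bits `n * a` to
`n * a + n - 1`. -/
def bitAt (m : ℕ) (a b : Fin n) : Bool := m.testBit (n * a + b)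

def callBits (m : ℕ) (c : Fin n × Fin n) : ℕ :=
  let row := (m >>> (n * c.1) ||| m >>> (n * c.2)) &&& (2 ^ n - 1)
  m ||| row <<< (n * c.1) ||| row <<< (n * c.2)

lemma testBit_shiftLeft_row {r : ℕ} (hr : r < 2 ^ n) (a i b : Fin n) :
    (r <<< (n * i)).testBit (n * a + b) = (decide (a = i) && r.testBit b) := by
  rw [Nat.testBit_shiftLeft]
  by_cases hai : a = i
  · subst hai
    simp
  · have hv : (a : ℕ) ≠ i := Fin.val_ne_of_ne hai
    simp only [hai, decide_false, Bool.false_and, Bool.and_eq_false_imp, decide_eq_true_eq]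
    intro hle
    apply Nat.testBit_lt_two_pow (lt_of_lt_of_le hr (Nat.pow_le_pow_right two_pos _))
    have hb := b.isLt
    rcases Nat.lt_or_gt_of_ne hv with h | h
    · have := Nat.mul_le_mul_left n (Nat.succ_le_of_lt h)
      rw [Nat.mul_succ] at this
      omega
    · have := Nat.mul_le_mul_left n (Nat.succ_le_of_lt h)
      rw [Nat.mul_succ] at this
      omega

lemma bitAt_callBits (m : ℕ) (c : Fin n × Fin n) (a b : Fin n) :
    bitAt (callBits m c) a b = true ↔
      callRel (fun x y => bitAt m x y = true) c a b := by
  set row := (m >>> (n * c.1) ||| m >>> (n * c.2)) &&& (2 ^ n - 1) with hrow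
  have hr : row < 2 ^ n :=
    Nat.lt_of_le_of_lt Nat.and_le_right (Nat.sub_lt (Nat.two_pow_pos n) one_pos)
  have hrb : row.testBit b = (bitAt m c.1 b || bitAt m c.2 b) := by
    simp [hrow, bitAt, Nat.add_comm]
  have hcall : callBits m c = m ||| row <<< (n * c.1) ||| row <<< (n * c.2) := rfl
  simp only [bitAt, hcall, Nat.testBit_or, testBit_shiftLeft_row hr, hrb, callRel]
  simp only [Bool.or_eq_true, Bool.and_eq_true, decide_eq_true_eq]
  tauto

lemma bitAt_foldl_callBits {m : ℕ} {R : Fin n → Fin n → Prop}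
    (h : ∀ a b, bitAt m a b = true ↔ R a b) (σ : List (Fin n × Fin n)) (a b : Fin n) :
    bitAt (σ.foldl callBits m) a b = true ↔ σ.foldl callRel R a b := by
  induction σ generalizing m R with
  | nil => exact h a b
  | cons c σ ih =>
    refine ih (fun x y => ?_)
    rw [bitAt_callBits]
    simp only [callRel, h]

def bitboardModel (G : GossipGraph (Fin n)) (mN mS : ℕ)
    (hN : ∀ a b, bitAt mN a b = true ↔ G.N a b) (hS : ∀ a b, bitAt mS a b = true ↔ G.S a b) :
    BoolModel G where
  agents := List.finRange n
  mem_agents := List.mem_finRange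
  N σ := bitAt (σ.foldl callBits mN)
  S σ := bitAt (σ.foldl callBits mS)
  N_iff σ a b := by rw [doCalls_N]; exact bitAt_foldl_callBits hN σ a b
  S_iff σ a b := by rw [doCalls_S]; exact bitAt_foldl_callBits hS σ a b

end Bitboards

def diamondModel : BoolModel diamond :=
  bitboardModel diamond 0b1011011100100001 0b1000010000100001 (by unfold diamond; decide)
    (by unfold diamond; decide)

/-- Hard look-ahead strengthening does not always yield a fixpoint of hard one-step
strengthening: on the diamond graph, `LNS^■(G)` has 8 successful and 8 unsuccessful
terminal sequences while `(LNS^■)^□(G)` has 8 successful and 4 unsuccessful terminal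
sequences; in particular `(LNS^■)^□(G) ⊊ LNS^■(G)`. -/
theorem hard_lookahead_not_onestep_fixpoint :
    Initial diamond ∧
    (succTerminals (extension (hardLookAhead (LNSsyn (Fin 4)))) diamond).ncard = 8 ∧
    (unsuccTerminals (extension (hardLookAhead (LNSsyn (Fin 4)))) diamond).ncard = 8 ∧
    (succTerminals (extension (hardOneStep (hardLookAhead (LNSsyn (Fin 4))))) diamond).ncard = 8 ∧
    (unsuccTerminals (extension (hardOneStep (hardLookAhead (LNSsyn (Fin 4))))) diamond).ncard = 4 ∧
    extension (hardOneStep (hardLookAhead (LNSsyn (Fin 4)))) diamond ⊂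
      extension (hardLookAhead (LNSsyn (Fin 4))) diamond := by
  have decLA := diamondModel.decides_hardLookAheadB diamondModel.decides_lnsB
    permitsOnlyUnknown_LNSsyn
  have decOS := diamondModel.decides_hardOneStepB decLA
  have unkLA := (permitsOnlyUnknown_LNSsyn (G := diamond)).hardLookAhead
  have unkOS := unkLA.hardOneStep
  refine ⟨fun _ _ => Iff.rfl, ?_, ?_, ?_, ?_,
    ssubset_of_ncard_unsuccTerminals_ne extension_hardOneStep_subset ?_⟩ <;>
  simp only [diamondModel.succTerminals_eq decLA unkLA, diamondModel.unsuccTerminals_eq decLA unkLA,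
    diamondModel.succTerminals_eq decOS unkOS, diamondModel.unsuccTerminals_eq decOS unkOS,
    Set.ncard_coe_finset] <;>
  decide

end Gossip
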